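/- Let L : ℝⁿ → ℝ be differentiable, α > 0, θ₀ : ℝᵐ → ℝⁿ differentiable in φ, and define θ₁(φ) = θ₀(φ) - α·∇L(θ₀(φ)). Treating θ₁ as a constant vector c = θ₁(φ*), the gradient at φ* of φ ↦ L(θ₀(φ)) equals (1/(2α)) times the gradient at φ* of φ ↦ ‖θ₀(φ) - c‖². -/

import Mathlib

/-! By the chain rule both gradients are `(Dθ₀)ᵀ` applied to a vector: `∇L(θ₀)` for the loss and
`2 (θ₀ - c)` for the squared distance. Since `c` is one SGD step from `θ₀`, `θ₀ - c = α ∇L(θ₀)`,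
so the second gradient is `2α` times the first. -/

open InnerProductSpace ContinuousLinearMap

section GradientChainRule

variable {E F : Type*} [NormedAddCommGroup E] [InnerProductSpace ℝ E] [CompleteSpace E]
  [NormedAddCommGroup F] [InnerProductSpace ℝ F] [CompleteSpace F]
  {θ : E → F} {D : E →L[ℝ] F} {x : E}

theorem toDual_adjoint_apply (D : E →L[ℝ] F) (g : F) :
    toDual ℝ E (adjoint D g) = (innerSL ℝ g).comp D := by
  ext v
  simp only [toDual_apply_apply, adjoint_inner_left, comp_apply, innerSL_apply_apply]

theorem HasGradientAt.comp_hasFDerivAt {L : F → ℝ} {g : F} (hL : HasGradientAt L g (θ x))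
    (hθ : HasFDerivAt θ D x) : HasGradientAt (fun y => L (θ y)) (adjoint D g) x := by
  rw [hasGradientAt_iff_hasFDerivAt, toDual_adjoint_apply]
  exact hL.hasFDerivAt.comp x hθ

theorem hasGradientAt_norm_sub_sq (hθ : HasFDerivAt θ D x) (c : F) :
    HasGradientAt (fun y => ‖θ y - c‖ ^ 2) (2 • adjoint D (θ x - c)) x := by
  rw [hasGradientAt_iff_hasFDerivAt, map_nsmul, toDual_adjoint_apply]
  exact (hθ.sub_const c).norm_sq

end GradientChainRule

theorem stmt9 {n m : ℕ}
    (L : EuclideanSpace ℝ (Fin n) → ℝ) (hL : Differentiable ℝ L)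
    (α : ℝ) (hα : 0 < α)
    (θ₀ : EuclideanSpace ℝ (Fin m) → EuclideanSpace ℝ (Fin n))
    (hθ₀ : Differentiable ℝ θ₀)
    (θ₁ : EuclideanSpace ℝ (Fin m) → EuclideanSpace ℝ (Fin n))
    (hθ₁ : ∀ φ, θ₁ φ = θ₀ φ - α • gradient L (θ₀ φ))
    (φs : EuclideanSpace ℝ (Fin m)) (c : EuclideanSpace ℝ (Fin n))
    (hc : c = θ₁ φs) :
    gradient (fun φ => L (θ₀ φ)) φs =
      (1 / (2 * α)) • gradient (fun φ => ‖θ₀ φ - c‖ ^ 2) φs := by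
  have hθ₀' := (hθ₀ φs).hasFDerivAt
  rw [((hL (θ₀ φs)).hasGradientAt.comp_hasFDerivAt hθ₀').gradient,
    (hasGradientAt_norm_sub_sq hθ₀' c).gradient, hc, hθ₁, sub_sub_cancel, map_smul,
    ← Nat.cast_smul_eq_nsmul ℝ, smul_smul, smul_smul, Nat.cast_ofNat,
    show 1 / (2 * α) * 2 * α = 1 by field_simp, one_smul]
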